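/- arXiv:2305.05614 — 5 statements merged into one kernel-verified Lean document; each statement's English description precedes it below -/
import Mathlib

section
/- Let s→t be a non-trivial L-justification of the arrow proportion a→b :· c→d in the pair of algebras (A,B). If for every ground (L,L_B)-substitution σ_B, c^B = (sσ_B)^B implies d^B = (tσ_B)^B, then s→t is a characteristic L-justification of a→b :· c→d in (A,B), and consequently the arrow proportion a→b :· c→d holds in (A,B). -/
/-! Bilingual analogical proportions: core framework. -/

/-- Ground terms over a language with index set `I` and rank function `r`. -/
inductive GTerm (I : Type) (r : I → ℕ) : Type where
  | app (i : I) (args : Fin (r i) → GTerm I r) : GTerm I r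

/-- An algebra over the language `(I, r)` with universe `α`. -/
structure Alg (I : Type) (r : I → ℕ) (α : Type) where
  op : ∀ i, (Fin (r i) → α) → α

/-- Denotation of a ground term in an algebra. -/
def GTerm.eval {I : Type} {r : I → ℕ} {α : Type} (A : Alg I r α) : GTerm I r → α
  | .app i args => A.op i (fun k => (args k).eval A)

/-- Hedges over the generalizing language `(I, rH)`, with X-variables
(placeholders for constant symbols), Z-variables (placeholders for elements)
and hedge variables (which may be substituted by the empty hedge `λ`),
each indexed by `ℕ`. -/
inductive Hedge (I : Type) (rH : I → ℕ) : Type where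
  | xvar : ℕ → Hedge I rH
  | zvar : ℕ → Hedge I rH
  | hvar : ℕ → Hedge I rH
  | app (i : I) (args : Fin (rH i) → Hedge I rH) : Hedge I rH

/-- The set of Z-variables occurring in a hedge. -/
def Hedge.zvars {I : Type} {rH : I → ℕ} : Hedge I rH → Set ℕ
  | .xvar _ => ∅
  | .zvar z => {z}
  | .hvar _ => ∅
  | .app _ args => ⋃ k, (args k).zvars

/-- A hedge is abstract iff it contains no constant symbols. -/
def Hedge.Abstract {I : Type} {rH : I → ℕ} : Hedge I rH → Prop
  | .xvar _ => True
  | .zvar _ => True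
  | .hvar _ => True
  | .app i args => rH i ≠ 0 ∧ ∀ k, (args k).Abstract

/-- A ground substitution from the generalizing hedge language `(I, rH)` into the
language `(I, rT)`: each function symbol `h_i` is sent to the `i`-th symbol of the
target (captured by keeping the index), X-variables are sent to constant symbols,
Z-variables to ground terms, and hedge variables to ground terms or `λ` (`none`). -/
structure GSub (I : Type) (rH rT : I → ℕ) : Type where
  xsub : ℕ → I
  xconst : ∀ x, rT (xsub x) = 0
  zsub : ℕ → GTerm I rT
  hsub : ℕ → Option (GTerm I rT)

/-- Application of a ground substitution to a hedge. The result is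
`none` (undefined, arity mismatch), `some none` (the empty hedge `λ`), or
`some (some t)` for a ground term `t`; argument positions substituted by `λ`
are deleted. -/
def Hedge.subst {I : Type} {rH rT : I → ℕ} (σ : GSub I rH rT) :
    Hedge I rH → Option (Option (GTerm I rT))
  | .xvar x => some (some (.app (σ.xsub x) (fun k => (Fin.cast (σ.xconst x) k).elim0)))
  | .zvar z => some (some (σ.zsub z))
  | .hvar H => some (σ.hsub H)
  | .app i args => do
      let l ← (List.ofFn (fun k => (args k).subst σ)).mapM id
      let l' := l.reduceOption
      if h : l'.length = rT i then
        some (some (.app i (fun k => l'.get (Fin.cast h.symm k))))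
      else none

variable {I α β : Type} {rA rB : I → ℕ}

/-- `Jus1 rH A a b` is the set of `L`-justifications of the arrow `a → b` in `A`. -/
def Jus1 (rH : I → ℕ) (A : Alg I rA α) (a b : α) :
    Set (Hedge I rH × Hedge I rH) :=
  {st | st.1.Abstract ∧ st.2.Abstract ∧ st.2.zvars ⊆ st.1.zvars ∧
    ∃ (σ : GSub I rH rA) (u v : GTerm I rA),
      st.1.subst σ = some (some u) ∧ st.2.subst σ = some (some v) ∧
      u.eval A = a ∧ v.eval A = b}

/-- `JusAB rH A B a b c d` is the set of `L`-justifications of the arrow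
proportion `a → b :· c → d` in `(A, B)`; the two witnessing ground
substitutions must agree on X-variables. -/
def JusAB (rH : I → ℕ) (A : Alg I rA α) (B : Alg I rB β)
    (a b : α) (c d : β) : Set (Hedge I rH × Hedge I rH) :=
  {st | st.1.Abstract ∧ st.2.Abstract ∧ st.2.zvars ⊆ st.1.zvars ∧
    ∃ (σA : GSub I rH rA) (σB : GSub I rH rB),
      σA.xsub = σB.xsub ∧
      (∃ u v : GTerm I rA,
        st.1.subst σA = some (some u) ∧ st.2.subst σA = some (some v) ∧
        u.eval A = a ∧ v.eval A = b) ∧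
      (∃ u v : GTerm I rB,
        st.1.subst σB = some (some u) ∧ st.2.subst σB = some (some v) ∧
        u.eval B = c ∧ v.eval B = d)}

/-- A justification is trivial in `A` iff it justifies every arrow in `A`. -/
def TrivialIn (rH : I → ℕ) (A : Alg I rA α) (st : Hedge I rH × Hedge I rH) : Prop :=
  ∀ a b : α, st ∈ Jus1 rH A a b

/-- A justification is trivial in `(A, B)` iff it is trivial in `A` and in `B`. -/
def TrivialPair (rH : I → ℕ) (A : Alg I rA α) (B : Alg I rB β)
    (st : Hedge I rH × Hedge I rH) : Prop :=
  TrivialIn rH A st ∧ TrivialIn rH B st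

/-- A set of justifications contains a non-trivial justification. -/
def Nontriv (rH : I → ℕ) (A : Alg I rA α) (B : Alg I rB β)
    (J : Set (Hedge I rH × Hedge I rH)) : Prop :=
  ∃ st ∈ J, ¬ TrivialPair rH A B st

/-- d-maximality of `JusAB rH A B a b c d` among `JusAB rH A B a b c d'`,
`d'` a ground term with `d'^B ≠ d`. -/
def DMaximal (rH : I → ℕ) (A : Alg I rA α) (B : Alg I rB β)
    (a b : α) (c d : β) : Prop :=
  ∀ d' : GTerm I rB, d'.eval B ≠ d →
    (Nontriv rH A B (JusAB rH A B a b c d) ∧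
      JusAB rH A B a b c d ⊆ JusAB rH A B a b c (d'.eval B)) →
    (Nontriv rH A B (JusAB rH A B a b c (d'.eval B)) ∧
      JusAB rH A B a b c (d'.eval B) ⊆ JusAB rH A B a b c d)

/-- The arrow proportion `a → b :· c → d` holds in `(A, B)`. -/
def ArrowHolds (rH : I → ℕ) (A : Alg I rA α) (B : Alg I rB β)
    (a b : α) (c d : β) : Prop :=
  ((∀ st ∈ Jus1 rH A a b, TrivialPair rH A B st) ∧
    (∀ st ∈ Jus1 rH B c d, TrivialPair rH A B st)) ∨
  (Nontriv rH A B (JusAB rH A B a b c d) ∧ DMaximal rH A B a b c d)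

/-- The analogical proportion `a : b :: c : d` holds in `(A, B)`. -/
def APHolds (rH : I → ℕ) (A : Alg I rA α) (B : Alg I rB β)
    (a b : α) (c d : β) : Prop :=
  ArrowHolds rH A B a b c d ∧ ArrowHolds rH A B b a d c ∧
  ArrowHolds rH B A c d a b ∧ ArrowHolds rH B A d c b a

/-- The set of analogical proportions holding in `(A, B)`, where the
generalizing language has rank `max (rA i) (rB i)`. -/
def AP (A : Alg I rA α) (B : Alg I rB β) : Set (α × α × β × β) :=
  {q | APHolds (fun i => max (rA i) (rB i)) A B q.1 q.2.1 q.2.2.1 q.2.2.2}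

/-- A characteristic set of justifications of `a → b :· c → d` in `(A, B)`. -/
def Characteristic (rH : I → ℕ) (A : Alg I rA α) (B : Alg I rB β)
    (a b : α) (c d : β) (J : Set (Hedge I rH × Hedge I rH)) : Prop :=
  J ⊆ JusAB rH A B a b c d ∧
  ∀ d' : GTerm I rB, J ⊆ JusAB rH A B a b c (d'.eval B) → d'.eval B = d


/-- Bilingual Uniqueness Lemma, part 1: if `s → t` is a non-trivial
justification of `a → b :· c → d` in `(A, B)` and, for every ground
`(L, L_B)`-substitution `σ_B`, `c = (sσ_B)^B` implies `d = (tσ_B)^B`, then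
`s → t` is a characteristic justification and the arrow proportion holds. -/
theorem bilingual_uniqueness_lemma_1 {I α β : Type} {rA rB : I → ℕ}
    (A : Alg I rA α) (B : Alg I rB β) (a b : α) (c d : β)
    (s t : Hedge I (fun i => max (rA i) (rB i)))
    (hjus : (s, t) ∈ JusAB (fun i => max (rA i) (rB i)) A B a b c d)
    (hnt : ¬ TrivialPair (fun i => max (rA i) (rB i)) A B (s, t))
    (H : ∀ (σB : GSub I (fun i => max (rA i) (rB i)) rB) (u : GTerm I rB),
      s.subst σB = some (some u) → u.eval B = c →
      ∃ v : GTerm I rB, t.subst σB = some (some v) ∧ v.eval B = d) :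
    Characteristic (fun i => max (rA i) (rB i)) A B a b c d {(s, t)} ∧
      ArrowHolds (fun i => max (rA i) (rB i)) A B a b c d := by
  have key : ∀ e : β, (s, t) ∈ JusAB (fun i => max (rA i) (rB i)) A B a b c e → e = d := by
    rintro e ⟨_, _, _, σA, σB, _, _, u, v, hsu, htv, huc, hve⟩
    obtain ⟨v', htv', hv'd⟩ := H σB u hsu huc
    rw [htv] at htv'
    cases htv'
    rw [← hve, hv'd]
  constructor
  · constructor
    · intro st hst
      rcases hst with rfl
      exact hjus
    · intro d' hd'
      exact key _ (hd' rfl)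
  · right
    refine ⟨⟨(s, t), hjus, hnt⟩, ?_⟩
    intro d' hne ⟨_, hsub⟩
    exact absurd (key _ (hsub hjus)) hne
end

section
/- Let s→t be a non-trivial L-justification of a→b :· c→d in (A,B) such that every Z-variable of s occurs in t and vice versa. If for every ground (L,L_B)-substitution σ_B we have c^B = (sσ_B)^B iff d^B = (tσ_B)^B, then both arrow proportions a→b :· c→d and b→a :· d→c hold in (A,B). -/
variable {I α β : Type} {rA rB : I → ℕ}

/-- Bilingual Uniqueness Lemma, part 2: if `s → t` is a non-trivial
justification of `a → b :· c → d` in `(A, B)`, the Z-variables of `s` and `t`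
coincide, and for every ground `(L, L_B)`-substitution `σ_B` we have
`c = (sσ_B)^B` iff `d = (tσ_B)^B`, then both `a → b :· c → d` and
`b → a :· d → c` hold in `(A, B)`. -/
theorem bilingual_uniqueness_lemma_2 {I α β : Type} {rA rB : I → ℕ}
    (A : Alg I rA α) (B : Alg I rB β) (a b : α) (c d : β)
    (s t : Hedge I (fun i => max (rA i) (rB i)))
    (hjus : (s, t) ∈ JusAB (fun i => max (rA i) (rB i)) A B a b c d)
    (hnt : ¬ TrivialPair (fun i => max (rA i) (rB i)) A B (s, t))
    (hz : s.zvars = t.zvars)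
    (H : ∀ σB : GSub I (fun i => max (rA i) (rB i)) rB,
      (∃ u : GTerm I rB, s.subst σB = some (some u) ∧ u.eval B = c) ↔
      (∃ v : GTerm I rB, t.subst σB = some (some v) ∧ v.eval B = d)) :
    ArrowHolds (fun i => max (rA i) (rB i)) A B a b c d ∧
      ArrowHolds (fun i => max (rA i) (rB i)) A B b a d c := by
  obtain ⟨hs, ht, hzs, σA, σB0, hx, ⟨uA, vA, hsuA, htvA, heA, hvA⟩,
    ⟨uB, vB, hsuB, htvB, heB, hvB⟩⟩ := hjus
  have hjus' : (s, t) ∈ JusAB (fun i => max (rA i) (rB i)) A B a b c d :=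
    ⟨hs, ht, hzs, σA, σB0, hx, ⟨uA, vA, hsuA, htvA, heA, hvA⟩,
      ⟨uB, vB, hsuB, htvB, heB, hvB⟩⟩
  have hmem2 : (t, s) ∈ JusAB (fun i => max (rA i) (rB i)) A B b a d c :=
    ⟨ht, hs, hz.subset, σA, σB0, hx, ⟨vA, uA, htvA, hsuA, hvA, heA⟩,
      ⟨vB, uB, htvB, hsuB, hvB, heB⟩⟩
  have hnt2 : ¬ TrivialPair (fun i => max (rA i) (rB i)) A B (t, s) := by
    intro ⟨hTA, hTB⟩
    apply hnt
    constructor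
    · intro a' b'
      obtain ⟨_, _, _, σ, u, v, hu, hv, ea, eb⟩ := hTA b' a'
      exact ⟨hs, ht, hzs, σ, v, u, hv, hu, eb, ea⟩
    · intro a' b'
      obtain ⟨_, _, _, σ, u, v, hu, hv, ea, eb⟩ := hTB b' a'
      exact ⟨hs, ht, hzs, σ, v, u, hv, hu, eb, ea⟩
  constructor
  · right
    refine ⟨⟨(s, t), hjus', hnt⟩, ?_⟩
    intro d' hne ⟨_, hsub⟩
    exfalso
    obtain ⟨_, _, _, σA', σB', _, _, ⟨u', v', hu', hv', ec, ed⟩⟩ := hsub hjus'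
    obtain ⟨v'', hv'', edv⟩ := (H σB').mp ⟨u', hu', ec⟩
    rw [hv'] at hv''
    exact hne (by rw [← ed, Option.some_inj.mp (Option.some_inj.mp hv''), edv])
  · right
    refine ⟨⟨(t, s), hmem2, hnt2⟩, ?_⟩
    intro c' hne ⟨_, hsub⟩
    exfalso
    obtain ⟨_, _, _, σA', σB', _, _, ⟨v', u', hv', hu', ed, ec⟩⟩ := hsub hmem2
    obtain ⟨u'', hu'', ecu⟩ := (H σB').mpr ⟨v', hv', ed⟩
    rw [hu'] at hu''
    exact hne (by rw [← ec, Option.some_inj.mp (Option.some_inj.mp hu''), ecu])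
end

section
/- Let s→t be a non-trivial L-justification of a→b :· c→d in (A,B) with Z-variables of s and t coinciding. If for every ground (L,L_A)-substitution σ_A, a^A = (sσ_A)^A iff b^A = (tσ_A)^A, and for every ground (L,L_B)-substitution σ_B, c^B = (sσ_B)^B iff d^B = (tσ_B)^B, then the full analogical proportion a:b::c:d holds in (A,B). -/
variable {I α β : Type} {rA rB : I → ℕ}

/-- Auxiliary: triviality is symmetric under swapping the two hedges,
provided their Z-variables coincide. -/
lemma trivialIn_swap {I α : Type} {rA rH : I → ℕ} (A : Alg I rA α)
    {s t : Hedge I rH} (hz : s.zvars = t.zvars)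
    (h : TrivialIn rH A (s, t)) : TrivialIn rH A (t, s) := by
  intro x y
  obtain ⟨hs, ht, _, σ, u, v, hu, hv, hue, hve⟩ := h y x
  exact ⟨ht, hs, hz.subset, σ, v, u, hv, hu, hve, hue⟩

/-- Bilingual Uniqueness Lemma, part 3: if `s → t` is a non-trivial
justification of `a → b :· c → d` in `(A, B)`, the Z-variables of `s` and `t`
coincide, and the biconditional conditions hold both in `A` (for `a`, `b`) and
in `B` (for `c`, `d`), then the full analogical proportion `a : b :: c : d`
holds in `(A, B)`. -/
theorem bilingual_uniqueness_lemma_3 {I α β : Type} {rA rB : I → ℕ}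
    (A : Alg I rA α) (B : Alg I rB β) (a b : α) (c d : β)
    (s t : Hedge I (fun i => max (rA i) (rB i)))
    (hjus : (s, t) ∈ JusAB (fun i => max (rA i) (rB i)) A B a b c d)
    (hnt : ¬ TrivialPair (fun i => max (rA i) (rB i)) A B (s, t))
    (hz : s.zvars = t.zvars)
    (HA : ∀ σA : GSub I (fun i => max (rA i) (rB i)) rA,
      (∃ u : GTerm I rA, s.subst σA = some (some u) ∧ u.eval A = a) ↔
      (∃ v : GTerm I rA, t.subst σA = some (some v) ∧ v.eval A = b))
    (HB : ∀ σB : GSub I (fun i => max (rA i) (rB i)) rB,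
      (∃ u : GTerm I rB, s.subst σB = some (some u) ∧ u.eval B = c) ↔
      (∃ v : GTerm I rB, t.subst σB = some (some v) ∧ v.eval B = d)) :
    APHolds (fun i => max (rA i) (rB i)) A B a b c d := by
  obtain ⟨hs, ht, hzsub, σA, σB, hx, ⟨u, v, hu, hv, hua, hvb⟩, ⟨p, q, hp, hq, hpc, hqd⟩⟩ := hjus
  have mem1 : (s, t) ∈ JusAB (fun i => max (rA i) (rB i)) A B a b c d :=
    ⟨hs, ht, hzsub, σA, σB, hx, ⟨u, v, hu, hv, hua, hvb⟩, ⟨p, q, hp, hq, hpc, hqd⟩⟩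
  have mem2 : (t, s) ∈ JusAB (fun i => max (rA i) (rB i)) A B b a d c :=
    ⟨ht, hs, hz.subset, σA, σB, hx, ⟨v, u, hv, hu, hvb, hua⟩, ⟨q, p, hq, hp, hqd, hpc⟩⟩
  have mem3 : (s, t) ∈ JusAB (fun i => max (rA i) (rB i)) B A c d a b :=
    ⟨hs, ht, hzsub, σB, σA, hx.symm, ⟨p, q, hp, hq, hpc, hqd⟩, ⟨u, v, hu, hv, hua, hvb⟩⟩
  have mem4 : (t, s) ∈ JusAB (fun i => max (rA i) (rB i)) B A d c b a :=
    ⟨ht, hs, hz.subset, σB, σA, hx.symm, ⟨q, p, hq, hp, hqd, hpc⟩, ⟨v, u, hv, hu, hvb, hua⟩⟩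
  have nt2 : ¬ TrivialPair (fun i => max (rA i) (rB i)) A B (t, s) := fun h =>
    hnt ⟨trivialIn_swap A hz.symm h.1, trivialIn_swap B hz.symm h.2⟩
  have nt3 : ¬ TrivialPair (fun i => max (rA i) (rB i)) B A (s, t) := fun h => hnt ⟨h.2, h.1⟩
  have nt4 : ¬ TrivialPair (fun i => max (rA i) (rB i)) B A (t, s) := fun h =>
    hnt ⟨trivialIn_swap A hz.symm h.2, trivialIn_swap B hz.symm h.1⟩
  refine ⟨Or.inr ⟨⟨(s, t), mem1, hnt⟩, ?_⟩, Or.inr ⟨⟨(t, s), mem2, nt2⟩, ?_⟩,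
    Or.inr ⟨⟨(s, t), mem3, nt3⟩, ?_⟩, Or.inr ⟨⟨(t, s), mem4, nt4⟩, ?_⟩⟩
  · intro d' hne ⟨_, hsub⟩
    obtain ⟨_, _, _, σA', σB', _, _, ⟨u', v', hu', hv', huc, hve⟩⟩ := hsub mem1
    obtain ⟨w, hw, hwd⟩ := (HB σB').mp ⟨u', hu', huc⟩
    have hvw : v' = w := Option.some_inj.mp (Option.some_inj.mp (hv'.symm.trans hw))
    exact absurd (hve.symm.trans (hvw ▸ hwd)) hne
  · intro d' hne ⟨_, hsub⟩
    obtain ⟨_, _, _, σA', σB', _, _, ⟨u', v', hu', hv', hud, hve⟩⟩ := hsub mem2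
    obtain ⟨w, hw, hwc⟩ := (HB σB').mpr ⟨u', hu', hud⟩
    have hvw : v' = w := Option.some_inj.mp (Option.some_inj.mp (hv'.symm.trans hw))
    exact absurd (hve.symm.trans (hvw ▸ hwc)) hne
  · intro d' hne ⟨_, hsub⟩
    obtain ⟨_, _, _, σB', σA', _, _, ⟨u', v', hu', hv', hua', hve⟩⟩ := hsub mem3
    obtain ⟨w, hw, hwb⟩ := (HA σA').mp ⟨u', hu', hua'⟩
    have hvw : v' = w := Option.some_inj.mp (Option.some_inj.mp (hv'.symm.trans hw))
    exact absurd (hve.symm.trans (hvw ▸ hwb)) hne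
  · intro d' hne ⟨_, hsub⟩
    obtain ⟨_, _, _, σB', σA', _, _, ⟨u', v', hu', hv', hub, hve⟩⟩ := hsub mem4
    obtain ⟨w, hw, hwa⟩ := (HA σA').mpr ⟨u', hu', hub⟩
    have hvw : v' = w := Option.some_inj.mp (Option.some_inj.mp (hv'.symm.trans hw))
    exact absurd (hve.symm.trans (hvw ▸ hwa)) hne
end

section
/- The relation ≲ of being bilingually isomorphic is not symmetric: (ℕ, S) ≲ (ℕ, S₂²) holds, but (ℕ, S₂²) ≲ (ℕ, S) fails, where S(a) = a+1 and S₂²(a₁,a₂) = a₂ + 1. -/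
/-- The `i`-th projection of the `n`-ary successor function:
`S_iⁿ(a₁, …, aₙ) = a_i + 1` (here `i` is a 0-based index); in particular
`S₂²(a₁, a₂) = a₂ + 1 = Sproj 2 1 _ ![a₁, a₂]`. -/
def Sproj (n i : ℕ) (h : i < n) (a : Fin n → ℕ) : ℕ := a ⟨i, h⟩ + 1

/-- being bilingually isomorphic is not symmetric:
`(ℕ, S) ≲ (ℕ, S₂²)` holds — the bijection `F` may be taken to satisfy
`F (S a) = S₂²(F a, F a)` (padding with the last argument) — but
`(ℕ, S₂²) ≲ (ℕ, S)` fails — no bijection `F` satisfies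
`F (S₂²(a₁, a₂)) = F a₁ + 1` for all `a₁, a₂ ∈ ℕ`. -/
theorem bilingual_iso_not_symmetric :
    (∃ F : ℕ → ℕ, Function.Bijective F ∧
        ∀ a : ℕ, F (a + 1) = Sproj 2 1 (by omega) (fun _ => F a)) ∧
    ¬ ∃ F : ℕ → ℕ, Function.Bijective F ∧
        ∀ a : Fin 2 → ℕ,
          F (Sproj 2 1 (by omega) a) = F (a ⟨0, by omega⟩) + 1 := by
  constructor
  · exact ⟨id, Function.bijective_id, fun a => rfl⟩
  · rintro ⟨F, hF, h⟩
    have h0 := h ![0, 0]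
    have h1 := h ![1, 0]
    simp [Sproj] at h0 h1
end

section
/- For any pair of algebras (A,B) in the bilingual framework, if J is a characteristic set of L-justifications of the arrow proportion a→b :· c→d in (A,B) and J contains at least one non-trivial justification, then Jus_{(A,B)}(a→b :· c→d) is d-maximal, and hence a→b :· c→d holds in (A,B). -/
variable {I α β : Type} {rA rB : I → ℕ}

/-- if `J` is a characteristic set of `L`-justifications of
`a → b :· c → d` in `(A, B)` containing at least one non-trivial justification,
then `Jus_{(A,B)}(a → b :· c → d)` is d-maximal and hence the arrow proportion
`a → b :· c → d` holds in `(A, B)`. -/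
theorem characteristic_set_arrow_holds {I α β : Type} {rA rB : I → ℕ}
    (A : Alg I rA α) (B : Alg I rB β) (a b : α) (c d : β)
    (J : Set (Hedge I (fun i => max (rA i) (rB i)) ×
        Hedge I (fun i => max (rA i) (rB i))))
    (hchar : Characteristic (fun i => max (rA i) (rB i)) A B a b c d J)
    (hnt : ∃ st ∈ J, ¬ TrivialPair (fun i => max (rA i) (rB i)) A B st) :
    DMaximal (fun i => max (rA i) (rB i)) A B a b c d ∧
      ArrowHolds (fun i => max (rA i) (rB i)) A B a b c d := by
  obtain ⟨hJ, hmax⟩ := hchar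
  have hdmax : DMaximal (fun i => max (rA i) (rB i)) A B a b c d := by
    intro d' hne ⟨_, hsub⟩
    exact absurd (hmax d' (fun st hst => hsub (hJ hst))) hne
  have hnt' : Nontriv (fun i => max (rA i) (rB i)) A B
      (JusAB (fun i => max (rA i) (rB i)) A B a b c d) := by
    obtain ⟨st, hst, h⟩ := hnt
    exact ⟨st, hJ hst, h⟩
  exact ⟨hdmax, Or.inr ⟨hnt', hdmax⟩⟩
end
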